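/- There exists a constant C = C(d) such that for every d ≥ 1, every k₀ ∈ ℤ^d with k₀ ≠ 0, every α ∈ ℝ, every M ≥ 1 and every R ≥ 1: the number of k ∈ ℤ^d with |k| < R and |k₀ · k − α| < M is at most C (M/|k₀| + 1) R^{d−1}. -/

import Mathlib

/-!
Let `c = k₀ i₀` be a coordinate of `k₀` of largest absolute value, so that
`|k₀| ≤ √d |c|`. Once the other `d - 1` coordinates of `k` are fixed, the condition
`|k₀ · k - α| < M` confines `k i₀` to an interval of length `2M / |c|`, which holds at most
`2M / |c| + 1 ≤ 2√d M / |k₀| + 1` integers. The other coordinates range over the integers of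
`(-R, R)`, at most `2R + 1 ≤ 3R` choices each.
-/

open scoped BigOperators Classical

noncomputable section

namespace KWE

/-- squared Euclidean norm of a lattice point -/
def nsq {d : ℕ} (k : Fin d → ℤ) : ℝ := ∑ i, ((k i : ℝ))^2

/-- Euclidean norm of a lattice point -/
def znorm {d : ℕ} (k : Fin d → ℤ) : ℝ := Real.sqrt (nsq k)

lemma Int.card_Icc_ceil_floor_le {a b : ℝ} (hab : a ≤ b) :
    ((Finset.Icc ⌈a⌉ ⌊b⌋).card : ℝ) ≤ b - a + 1 := by
  rw [Int.card_Icc]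
  rcases le_total 0 (⌊b⌋ + 1 - ⌈a⌉) with h | h
  · rw [← Int.cast_natCast, Int.toNat_of_nonneg h]
    push_cast
    linarith [Int.floor_le b, Int.le_ceil a]
  · rw [Int.toNat_of_nonpos h]
    push_cast
    linarith

lemma Int.mem_Icc_of_abs_sub_lt {t r : ℝ} {x : ℤ} (h : |(x : ℝ) - t| < r) :
    x ∈ Finset.Icc ⌈t - r⌉ ⌊t + r⌋ := by
  rw [← Int.cast_mem_Icc_iff]
  constructor <;> linarith [abs_lt.1 h]

lemma Int.mem_Icc_of_abs_mul_sub_lt {c β M : ℝ} (hc : c ≠ 0) {x : ℤ} (h : |c * x - β| < M) :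
    x ∈ Finset.Icc ⌈β / c - M / |c|⌉ ⌊β / c + M / |c|⌋ := by
  refine Int.mem_Icc_of_abs_sub_lt ?_
  rw [show (x : ℝ) - β / c = (c * x - β) / c by field_simp, abs_div]
  exact div_lt_div_of_pos_right h (abs_pos.2 hc)

lemma ncard_le_card_mul_of_slices {α β : Type*} {U : Set (α × β)} (B : Finset β)
    (F : β → Finset α) (hU : ∀ p ∈ U, p.2 ∈ B ∧ p.1 ∈ F p.2) {m : ℝ}
    (hF : ∀ y ∈ B, ((F y).card : ℝ) ≤ m) :
    (U.ncard : ℝ) ≤ B.card * m := by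
  have hsub : U ⊆ ↑(B.biUnion fun y => F y ×ˢ {y}) := by
    rintro ⟨x, y⟩ hp
    obtain ⟨hy, hx⟩ := hU _ hp
    exact Finset.mem_biUnion.2 ⟨y, hy, by simpa using hx⟩
  calc (U.ncard : ℝ) ≤ (B.biUnion fun y => F y ×ˢ {y}).card := by
        exact_mod_cast (Set.ncard_le_ncard hsub).trans_eq (Set.ncard_coe_finset _)
    _ ≤ ∑ y ∈ B, ((F y ×ˢ {y}).card : ℝ) := by exact_mod_cast Finset.card_biUnion_le
    _ ≤ ∑ _y ∈ B, m := Finset.sum_le_sum fun y hy => by simpa using hF y hy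
    _ = B.card * m := by rw [Finset.sum_const, nsmul_eq_mul]

section znorm

variable {d : ℕ}

lemma abs_le_znorm (k : Fin d → ℤ) (j : Fin d) : |(k j : ℝ)| ≤ znorm k := by
  rw [← Real.sqrt_sq_eq_abs]
  exact Real.sqrt_le_sqrt <|
    Finset.single_le_sum (f := fun i => ((k i : ℝ)) ^ 2) (fun i _ => sq_nonneg _)
      (Finset.mem_univ j)

lemma znorm_le_sqrt_mul {k : Fin d → ℤ} {a : ℝ} (ha : 0 ≤ a) (hk : ∀ j, |(k j : ℝ)| ≤ a) :
    znorm k ≤ √d * a := by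
  have hnsq : nsq k ≤ d * a ^ 2 := by
    calc nsq k ≤ ∑ _j : Fin d, a ^ 2 :=
          Finset.sum_le_sum fun j _ => sq_le_sq' (abs_le.1 (hk j)).1 (abs_le.1 (hk j)).2
      _ = d * a ^ 2 := by simp
  calc znorm k ≤ √(d * a ^ 2) := Real.sqrt_le_sqrt hnsq
    _ = √d * a := by rw [Real.sqrt_mul (Nat.cast_nonneg d), Real.sqrt_sq ha]

end znorm

lemma ncard_near_hyperplane_le {n : ℕ} {k₀ : Fin (n + 1) → ℤ} (hk₀ : k₀ ≠ 0) (α : ℝ)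
    {M R : ℝ} (hM : 0 ≤ M) (hR : 0 ≤ R) :
    (Set.ncard {k : Fin (n + 1) → ℤ |
        znorm k < R ∧ |(∑ i, (k₀ i : ℝ) * (k i : ℝ)) - α| < M} : ℝ)
      ≤ (2 * √(n + 1 : ℕ) * (M / znorm k₀) + 1) * (2 * R + 1) ^ n := by
  obtain ⟨i₀, hi₀⟩ := Finite.exists_max fun j => |(k₀ j : ℝ)|
  set c : ℝ := (k₀ i₀ : ℝ)
  have hc : 0 < |c| := by
    by_contra! h
    exact hk₀ <| funext fun j => by exact_mod_cast abs_nonpos_iff.1 ((hi₀ j).trans h)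
  have hznorm : 0 < znorm k₀ := hc.trans_le (abs_le_znorm k₀ i₀)
  have hslice : 2 * M / |c| ≤ 2 * √(n + 1 : ℕ) * (M / znorm k₀) := by
    rw [div_le_iff₀ hc, show 2 * √(n + 1 : ℕ) * (M / znorm k₀) * |c|
      = 2 * M * (√(n + 1 : ℕ) * |c|) / znorm k₀ by ring, le_div_iff₀ hznorm]
    nlinarith [znorm_le_sqrt_mul (abs_nonneg c) hi₀]
  let β : (Fin n → ℤ) → ℝ := fun y => α - ∑ j, (k₀ (i₀.succAbove j) : ℝ) * (y j)
  let e := (Fin.insertNthEquiv (fun _ => ℤ) i₀).symm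
  rw [← Set.ncard_image_of_injective _ e.injective]
  refine (ncard_le_card_mul_of_slices (m := 2 * M / |c| + 1)
    (Fintype.piFinset fun _ => Finset.Icc ⌈0 - R⌉ ⌊0 + R⌋)
    (fun y => Finset.Icc ⌈β y / c - M / |c|⌉ ⌊β y / c + M / |c|⌋) ?_ ?_).trans ?_
  · rintro _ ⟨k, ⟨hkR, hkM⟩, rfl⟩
    have hsplit : ∑ i, (k₀ i : ℝ) * (k i : ℝ) - α = c * k i₀ - β (i₀.removeNth k) := by
      rw [Fin.sum_univ_succAbove _ i₀]
      simp only [β, Fin.removeNth]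
      ring
    refine ⟨Fintype.mem_piFinset.2 fun j => Int.mem_Icc_of_abs_sub_lt ?_,
      Int.mem_Icc_of_abs_mul_sub_lt (abs_pos.1 hc) (hsplit ▸ hkM)⟩
    simpa [e, Fin.removeNth] using (abs_le_znorm k _).trans_lt hkR
  · intro y _
    refine (Int.card_Icc_ceil_floor_le (by linarith [div_nonneg hM hc.le])).trans_eq ?_
    ring
  · rw [Fintype.card_piFinset_const, Nat.cast_pow, mul_comm]
    gcongr
    exact (Int.card_Icc_ceil_floor_le (by linarith)).trans_eq (by ring)

theorem lattice_points_near_hyperplane_general (d : ℕ) :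
    ∃ C : ℝ, 0 < C ∧
      ∀ k₀ : Fin d → ℤ, k₀ ≠ 0 →
      ∀ α M R : ℝ, 1 ≤ M → 1 ≤ R →
        (Set.ncard {k : Fin d → ℤ |
            znorm k < R ∧ |(∑ i, (k₀ i : ℝ) * (k i : ℝ)) - α| < M} : ℝ)
        ≤ C * (M / znorm k₀ + 1) * R ^ ((d:ℝ) - 1) := by
  rcases d with _ | n
  · exact ⟨1, one_pos, fun k₀ hk₀ => absurd (Subsingleton.elim k₀ 0) hk₀⟩
  refine ⟨3 ^ n * (2 * √(n + 1 : ℕ) + 1), by positivity, fun k₀ hk₀ α M R hM hR => ?_⟩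
  have hq : 0 ≤ M / znorm k₀ := div_nonneg (by linarith) (Real.sqrt_nonneg _)
  calc _ ≤ (2 * √(n + 1 : ℕ) * (M / znorm k₀) + 1) * (2 * R + 1) ^ n :=
        ncard_near_hyperplane_le hk₀ α (by linarith) (by linarith)
    _ ≤ ((2 * √(n + 1 : ℕ) + 1) * (M / znorm k₀ + 1)) * (3 * R) ^ n := by
        gcongr
        · nlinarith [Real.sqrt_nonneg (n + 1 : ℕ)]
        · linarith
    _ = _ := by
        rw [Nat.cast_succ, add_sub_cancel_right, Real.rpow_natCast, mul_pow]
        ring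

/-- Counting lattice points in a ball lying close to a hyperplane. -/
theorem lattice_points_near_hyperplane (d : ℕ) (hd : 1 ≤ d) :
    ∃ C : ℝ, 0 < C ∧
      ∀ k₀ : Fin d → ℤ, k₀ ≠ 0 →
      ∀ α M R : ℝ, 1 ≤ M → 1 ≤ R →
        (Set.ncard {k : Fin d → ℤ |
            znorm k < R ∧ |(∑ i, (k₀ i : ℝ) * (k i : ℝ)) - α| < M} : ℝ)
        ≤ C * (M / znorm k₀ + 1) * R ^ ((d:ℝ) - 1) :=
  lattice_points_near_hyperplane_general d

end KWE
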